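/- Let G be a connected graph containing neither K_5 nor K_{3,3} as an immersion, and let F be a minimal internal i-edge cut in G for some i ∈ {1,2,3}. Then both connected components of the F-split G|_F contain neither K_5 nor K_{3,3} as an immersion. -/

import Mathlib

attribute [local instance] Classical.propDecidable

set_option autoImplicit false

noncomputable section

/-- A finite undirected loopless multigraph: a finite type of vertices, a finite type of
edges, and a map assigning to every edge its (unordered) pair of distinct endpoints. -/
structure Multigraph : Type 1 where
  V : Type
  E : Type
  finV : Finite V
  finE : Finite E
  ends : E → Sym2 V
  loopless : ∀ e, ¬ (ends e).IsDiag

attribute [instance] Multigraph.finV Multigraph.finE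

namespace Multigraph

variable {G : Multigraph}

/-- Walks in a multigraph, recorded together with their two endpoints. -/
inductive Walk (G : Multigraph) : G.V → G.V → Type where
  | nil {v : G.V} : Walk G v v
  | cons {u v w : G.V} (e : G.E) (h : G.ends e = s(u, v)) (t : Walk G v w) : Walk G u w

namespace Walk

/-- The list of edges traversed by a walk. -/
def edges : ∀ {u v : G.V}, G.Walk u v → List G.E
  | _, _, nil => []
  | _, _, cons e _ t => e :: t.edges

/-- The list of vertices visited by a walk (in order). -/
def support : ∀ {u v : G.V}, G.Walk u v → List G.V
  | u, _, nil => [u]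
  | u, _, cons _ _ t => u :: t.support

/-- Concatenation of walks. -/
def append : ∀ {u v w : G.V}, G.Walk u v → G.Walk v w → G.Walk u w
  | _, _, _, nil, q => q
  | _, _, _, cons e h t, q => cons e h (t.append q)

/-- Reversal of a walk. -/
def reverse : ∀ {u v : G.V}, G.Walk u v → G.Walk v u
  | _, _, nil => nil
  | _, _, cons e h t => t.reverse.append (cons e (by rw [h]; exact Sym2.eq_swap) nil)

/-- A walk is a path if it visits no vertex twice.  (A single vertex is a trivial path.) -/
def IsPath {u v : G.V} (w : G.Walk u v) : Prop := w.support.Nodup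

/-- A closed walk is a cycle if it uses at least one edge, repeats no edge, and repeats
no vertex except that it ends where it started. -/
def IsCycle {v : G.V} (w : G.Walk v v) : Prop :=
  w.edges ≠ [] ∧ w.edges.Nodup ∧ w.support.tail.Nodup

/-- The set of edges of a walk. -/
def edgeSet {u v : G.V} (w : G.Walk u v) : Set G.E := {e | e ∈ w.edges}

/-- The set of vertices of a walk. -/
def supportSet {u v : G.V} (w : G.Walk u v) : Set G.V := {x | x ∈ w.support}

end Walk

/-- Two walks are edge-disjoint if they share no edge. -/
def EdgeDisjoint {u v u' v' : G.V} (p : G.Walk u v) (q : G.Walk u' v') : Prop :=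
  ∀ e : G.E, e ∈ p.edges → e ∉ q.edges

/-- Two vertices are reachable from one another if some walk joins them. -/
def Reachable (G : Multigraph) (u v : G.V) : Prop := Nonempty (G.Walk u v)

/-- Reachability is an equivalence relation. -/
def reachSetoid (G : Multigraph) : Setoid G.V :=
  ⟨G.Reachable,
    ⟨fun _ => ⟨Walk.nil⟩, fun ⟨w⟩ => ⟨w.reverse⟩, fun ⟨w⟩ ⟨w'⟩ => ⟨w.append w'⟩⟩⟩

/-- A multigraph is connected if every two vertices are joined by a walk. -/
def Connected (G : Multigraph) : Prop := ∀ u v : G.V, G.Reachable u v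

/-- The number of connected components. -/
def numComponents (G : Multigraph) : ℕ := Nat.card (Quotient G.reachSetoid)

/-- A set of vertices is connected in `G` if any two of its vertices are joined by a
walk staying inside the set. -/
def ConnectedIn (G : Multigraph) (S : Set G.V) : Prop :=
  ∀ u ∈ S, ∀ v ∈ S, ∃ w : G.Walk u v, ∀ x ∈ w.support, x ∈ S

/-- Reachability inside a prescribed set of vertices, using only a prescribed
set of edges. -/
def ReachableWithin (G : Multigraph) (W : Set G.V) (E₀ : Set G.E) (u v : G.V) : Prop :=
  ∃ w : G.Walk u v, (∀ x ∈ w.support, x ∈ W) ∧ ∀ e ∈ w.edges, e ∈ E₀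

/-- The degree of a vertex: the number of edges incident to it. -/
def degree (G : Multigraph) (v : G.V) : ℕ := Nat.card {e : G.E // v ∈ G.ends e}

/-- A multigraph is sub-cubic if all its vertices have degree at most `3`. -/
def SubCubic (G : Multigraph) : Prop := ∀ v : G.V, G.degree v ≤ 3

/-- Deletion of a set of edges. -/
def deleteEdges (G : Multigraph) (F : Set G.E) : Multigraph where
  V := G.V
  E := {e : G.E // e ∉ F}
  finV := G.finV
  finE := inferInstance
  ends := fun e => G.ends e.1
  loopless := fun e => G.loopless e.1

/-- An edge cut: a non-empty set of edges, all lying in one connected component,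
whose deletion increases the number of connected components. -/
def IsEdgeCut (G : Multigraph) (F : Set G.E) : Prop :=
  F.Nonempty ∧
  (∀ e ∈ F, ∀ e' ∈ F, ∀ u v : G.V, u ∈ G.ends e → v ∈ G.ends e' → G.Reachable u v) ∧
  G.numComponents < (G.deleteEdges F).numComponents

/-- A minimal edge cut: its deletion produces exactly one more connected component. -/
def IsMinimalEdgeCut (G : Multigraph) (F : Set G.E) : Prop :=
  G.IsEdgeCut F ∧ (G.deleteEdges F).numComponents = G.numComponents + 1

/-- An internal edge cut: a minimal edge cut such that both connected components into
which the component of `G` containing the cut is split have at least `2` vertices.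
(Equivalently: every vertex of the component of `G` containing the cut lies, after
deletion of the cut, in a component with at least `2` vertices.) -/
def IsInternalEdgeCut (G : Multigraph) (F : Set G.E) : Prop :=
  G.IsMinimalEdgeCut F ∧
  ∀ v : G.V, (∃ e ∈ F, ∃ u ∈ G.ends e, G.Reachable v u) →
    2 ≤ Nat.card {u : G.V | (G.deleteEdges F).Reachable u v}

/-- `H` is immersed in `G`: there is an injection `f` of the vertices of `H` into the
vertices of `G`, and for every edge `{u,v}` of `H` a path in `G` from `f u` to `f v`,
these paths being pairwise edge-disjoint. -/
def Immersion (H G : Multigraph) : Prop :=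
  ∃ f : H.V → G.V, Function.Injective f ∧
    ∃ P : H.E → Σ a : G.V, Σ b : G.V, G.Walk a b,
      (∀ e : H.E, (P e).2.2.IsPath) ∧
      (∀ e : H.E, (H.ends e).map f = s((P e).1, (P e).2.1)) ∧
      ∀ e e' : H.E, e ≠ e' → EdgeDisjoint (P e).2.2 (P e').2.2

/-- The complete graph on five vertices. -/
def K5 : Multigraph where
  V := Fin 5
  E := {p : Sym2 (Fin 5) // ¬ p.IsDiag}
  finV := inferInstance
  finE := inferInstance
  ends := fun e => e.1
  loopless := fun e => e.2

/-- The complete bipartite graph with two parts of three vertices. -/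
def K33 : Multigraph where
  V := Fin 3 ⊕ Fin 3
  E := Fin 3 × Fin 3
  finV := inferInstance
  finE := inferInstance
  ends := fun p => s(Sum.inl p.1, Sum.inr p.2)
  loopless := fun p h => by
    rw [Sym2.mk_isDiag_iff] at h
    cases h

private lemma contract_key {α : Type} (S : Set α) (z : Sym2 α) :
    ¬ z.IsDiag → (¬ ∀ v ∈ z, v ∈ S) →
    ¬ (z.map fun v =>
        if h : v ∈ S then (Sum.inr () : {v : α // v ∉ S} ⊕ Unit) else Sum.inl ⟨v, h⟩).IsDiag := by
  induction z using Sym2.ind with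
  | _ a b =>
    intro hdiag hS h
    rw [Sym2.map_pair_eq, Sym2.mk_isDiag_iff] at h
    by_cases ha : a ∈ S <;> by_cases hb : b ∈ S
    · exact hS fun v hv => by rcases Sym2.mem_iff.mp hv with rfl | rfl <;> assumption
    · rw [dif_pos ha, dif_neg hb] at h
      cases h
    · rw [dif_neg ha, dif_pos hb] at h
      cases h
    · rw [dif_neg ha, dif_neg hb] at h
      injection h with h'
      exact hdiag (Sym2.mk_isDiag_iff.mpr (congrArg Subtype.val h'))

/-- Contraction of a set `S` of vertices of `G` to a single new vertex: edges lying
entirely inside `S` disappear, edges meeting `S` are redirected to the new vertex.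
(When `S` induces a connected subgraph this is the result of contracting all its edges.) -/
def contractSet (G : Multigraph) (S : Set G.V) : Multigraph where
  V := {v : G.V // v ∉ S} ⊕ Unit
  E := {e : G.E // ¬ ∀ v ∈ G.ends e, v ∈ S}
  finV := inferInstance
  finE := inferInstance
  ends := fun e => (G.ends e.1).map fun v =>
    if h : v ∈ S then Sum.inr () else Sum.inl ⟨v, h⟩
  loopless := fun e => contract_key S (G.ends e.1) (G.loopless e.1) e.2

/-- The graph obtained from `G` by subdividing every edge exactly once: each edge `e`
is replaced by a new vertex joined to the two endpoints of `e`. -/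
def subdivision (G : Multigraph) : Multigraph where
  V := G.V ⊕ G.E
  E := Σ e : G.E, {v : G.V // v ∈ G.ends e}
  finV := inferInstance
  finE := inferInstance
  ends := fun p => s(Sum.inl p.2.1, Sum.inr p.1)
  loopless := fun p h => by
    rw [Sym2.mk_isDiag_iff] at h
    cases h

/-- The multigraph associated with a simple graph. -/
def ofSimpleGraph {α : Type} [Finite α] (H : SimpleGraph α) : Multigraph where
  V := α
  E := {p : Sym2 α // p ∈ H.edgeSet}
  finV := ‹Finite α›
  finE := inferInstance
  ends := fun e => e.1
  loopless := fun e => H.not_isDiag_of_mem_edgeSet e.2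

/-- The `(r,q)`-cylinder: the cartesian product of a cycle on `r` vertices and a path
on `q` vertices. -/
def cylinder (r q : ℕ) : Multigraph :=
  ofSimpleGraph ((SimpleGraph.cycleGraph r).boxProd (SimpleGraph.pathGraph q))

/-- `H` is a minor of `G`: there are pairwise disjoint nonempty connected branch sets
`β u ⊆ V(G)`, one for every vertex `u` of `H`, and an injection `φ` of the edges of `H`
into the edges of `G` such that the edge `φ e` joins the branch sets of the two
endpoints of `e`. -/
def IsMinor (H G : Multigraph) : Prop :=
  ∃ β : H.V → Set G.V, ∃ φ : H.E → G.E,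
    Function.Injective φ ∧
    (∀ u : H.V, (β u).Nonempty) ∧
    (∀ u : H.V, G.ConnectedIn (β u)) ∧
    (∀ u v : H.V, u ≠ v → Disjoint (β u) (β v)) ∧
    ∀ (e : H.E) (u v : H.V), H.ends e = s(u, v) →
      ∃ x y : G.V, G.ends (φ e) = s(x, y) ∧ x ∈ β u ∧ y ∈ β v

/-- The degree of a vertex of a simple graph (number of neighbours). -/
def simpleDegree {n : ℕ} (T : SimpleGraph (Fin n)) (v : Fin n) : ℕ :=
  Nat.card {u : Fin n // T.Adj v u}

/-- A branch decomposition of `G`: a ternary tree `T` together with a bijection between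
the edges of `G` and the leaves of `T`. -/
structure BranchDecomposition (G : Multigraph) where
  n : ℕ
  T : SimpleGraph (Fin n)
  acyclic : T.IsAcyclic
  preconnected : T.Preconnected
  ternary : ∀ v : Fin n, simpleDegree T v ≤ 1 ∨ simpleDegree T v = 3
  leafEquiv : G.E ≃ {v : Fin n // simpleDegree T v ≤ 1}

/-- For an edge `{a,b}` of the tree of a branch decomposition, the number of vertices of
`G` incident both with an edge mapped to a leaf on the side of `a` and with an edge
mapped to a leaf on the side of `b` (sides taken in `T` minus the edge `{a,b}`). -/
def BranchDecomposition.sigmaWidth {G : Multigraph} (B : BranchDecomposition G)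
    (a b : Fin B.n) : ℕ :=
  Nat.card {x : G.V | ∃ e₁ e₂ : G.E, x ∈ G.ends e₁ ∧ x ∈ G.ends e₂ ∧
    (B.T.deleteEdges {s(a, b)}).Reachable (B.leafEquiv e₁).1 a ∧
    (B.T.deleteEdges {s(a, b)}).Reachable (B.leafEquiv e₂).1 b}

/-- The width of a branch decomposition. -/
def BranchDecomposition.width {G : Multigraph} (B : BranchDecomposition G) : ℕ :=
  sSup {w : ℕ | ∃ a b : Fin B.n, B.T.Adj a b ∧ w = B.sigmaWidth a b}

/-- The branch-width of `G`: the minimum width of a branch decomposition of `G`. -/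
def branchwidth (G : Multigraph) : ℕ :=
  sInf {w : ℕ | ∃ B : BranchDecomposition G, B.width = w}

/-- A (topological) embedding of the multigraph `G` in the space `X`: vertices become
distinct points, edges become arcs joining the images of their endpoints, arcs meet
vertex images only at their endpoints and meet each other only at images of vertices. -/
structure EmbeddingIn (G : Multigraph) (X : Type) [TopologicalSpace X] where
  vmap : G.V → X
  emap : G.E → unitInterval → X
  vmap_inj : Function.Injective vmap
  emap_cont : ∀ e, Continuous (emap e)
  emap_inj : ∀ e, Function.Injective (emap e)
  emap_ends : ∀ e, (G.ends e).map vmap = s(emap e 0, emap e 1)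
  emap_vertex : ∀ e t, emap e t ∈ Set.range vmap → t = 0 ∨ t = 1
  emap_disjoint : ∀ e e', e ≠ e' → ∀ t t', emap e t = emap e' t' →
    emap e t ∈ Set.range vmap

variable {X : Type} [TopologicalSpace X]

/-- The set of points of `X` occupied by the embedded graph. -/
def EmbeddingIn.carrier (emb : EmbeddingIn G X) : Set X :=
  Set.range emb.vmap ∪ ⋃ e : G.E, Set.range (emb.emap e)

/-- The set of points of `X` occupied by an embedded walk. -/
def EmbeddingIn.walkImage (emb : EmbeddingIn G X) {u v : G.V} (w : G.Walk u v) : Set X :=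
  (emb.vmap '' w.supportSet) ∪ ⋃ e ∈ w.edges, Set.range (emb.emap e)

/-- An open disk in `X`: an open set homeomorphic to an open disk of the plane. -/
def IsOpenDisk (U : Set X) : Prop :=
  IsOpen U ∧ Nonempty (↥U ≃ₜ ↥(Metric.ball (0 : EuclideanSpace ℝ (Fin 2)) 1))

/-- A disk around the vertex `x`: an open disk containing (the image of) `x` all of
whose points on the graph are `x` itself or lie on edges incident with `x`. -/
def EmbeddingIn.IsDiskAround (emb : EmbeddingIn G X) (x : G.V) (Δ : Set X) : Prop :=
  IsOpenDisk Δ ∧ emb.vmap x ∈ Δ ∧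
  ∀ p ∈ Δ ∩ emb.carrier,
    p = emb.vmap x ∨ ∃ e : G.E, x ∈ G.ends e ∧ p ∈ Set.range (emb.emap e)

/-- Two edge-disjoint walks are confluent if for every common vertex `x` that is not an
endpoint of either of them and every disk `Δ` around `x`, one of the connected
components of `Δ` minus the first walk contains no point of the second walk. -/
def Confluent (emb : EmbeddingIn G X) {u₁ w₁ u₂ w₂ : G.V}
    (P₁ : G.Walk u₁ w₁) (P₂ : G.Walk u₂ w₂) : Prop :=
  ∀ x : G.V, x ∈ P₁.support → x ∈ P₂.support →
    x ≠ u₁ → x ≠ w₁ → x ≠ u₂ → x ≠ w₂ →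
    ∀ Δ : Set X, emb.IsDiskAround x Δ →
      ∃ p ∈ Δ \ emb.walkImage P₁,
        connectedComponentIn (Δ \ emb.walkImage P₁) p ∩ emb.walkImage P₂ = ∅

/-- `x` is an overlapping vertex of `P₁` and `P₂`: a common vertex, not an endpoint of
either walk, such that for some disk `Δ` around `x` both connected components of `Δ`
minus `P₁` contain points of `P₂`. -/
def OverlapVertex (emb : EmbeddingIn G X) (x : G.V) {u₁ w₁ u₂ w₂ : G.V}
    (P₁ : G.Walk u₁ w₁) (P₂ : G.Walk u₂ w₂) : Prop :=
  x ∈ P₁.support ∧ x ∈ P₂.support ∧ x ≠ u₁ ∧ x ≠ w₁ ∧ x ≠ u₂ ∧ x ≠ w₂ ∧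
  ∃ Δ : Set X, emb.IsDiskAround x Δ ∧
    ∀ p ∈ Δ \ emb.walkImage P₁,
      (connectedComponentIn (Δ \ emb.walkImage P₁) p ∩ emb.walkImage P₂).Nonempty

/-- Two walks with the same first vertex are well-arranged if their common vertices
appear in the same order in both. -/
def WellArranged {u v₁ v₂ : G.V} (P₁ : G.Walk u v₁) (P₂ : G.Walk u v₂) : Prop :=
  P₁.support.filter (fun x => decide (x ∈ P₂.support)) =
    P₂.support.filter (fun x => decide (x ∈ P₁.support))

/-- `f_𝒫(x)`: the number of pairs of walks of the collection `P` for which `x` is an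
overlapping vertex. -/
def overlapCount (emb : EmbeddingIn G X) {r : ℕ} {v : G.V} {vs : Fin r → G.V}
    (P : (i : Fin r) → G.Walk v (vs i)) (x : G.V) : ℕ :=
  Nat.card {p : Fin r × Fin r // p.1 < p.2 ∧
    (OverlapVertex emb x (P p.1) (P p.2) ∨ OverlapVertex emb x (P p.2) (P p.1))}

/-- `g(𝒫)`: the sum over all vertices `x` of `f_𝒫(x)`. -/
def gFun (emb : EmbeddingIn G X) {r : ℕ} {v : G.V} {vs : Fin r → G.V}
    (P : (i : Fin r) → G.Walk v (vs i)) : ℕ :=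
  ∑ᶠ x : G.V, overlapCount emb P x

/-- The 2-dimensional sphere. -/
abbrev Sphere2 : Type := ↥(Metric.sphere (0 : EuclideanSpace ℝ (Fin 3)) 1)

/-- A multigraph is planar if it embeds in the sphere. -/
def Planar (G : Multigraph) : Prop := Nonempty (EmbeddingIn G Sphere2)

/-- The annulus between two disjoint cycles with point sets `K₁`, `K₂` on the sphere:
the complement of the two open disks `Δᵢ` bounded by `Kᵢ` containing no point of the
other cycle. -/
def annulusBetween (K₁ K₂ : Set Sphere2) : Set Sphere2 :=
  ({x : Sphere2 | x ∉ K₁ ∧ connectedComponentIn K₁ᶜ x ∩ K₂ = ∅} ∪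
   {x : Sphere2 | x ∉ K₂ ∧ connectedComponentIn K₂ᶜ x ∩ K₁ = ∅})ᶜ

/-- A collection of `r` pairwise disjoint cycles embedded in the sphere is nested if
consecutive annuli between them compose. -/
def NestedCycles (emb : EmbeddingIn G Sphere2) (r : ℕ) (c : Fin r → G.V)
    (C : (i : Fin r) → G.Walk (c i) (c i)) : Prop :=
  (∀ i, (C i).IsCycle) ∧
  (∀ i j : Fin r, i ≠ j → ∀ x, x ∈ (C i).support → x ∉ (C j).support) ∧
  ∀ (i : Fin r) (h2 : i.1 + 2 < r),
    annulusBetween (emb.walkImage (C i)) (emb.walkImage (C ⟨i.1 + 1, by omega⟩)) ∪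
      annulusBetween (emb.walkImage (C ⟨i.1 + 1, by omega⟩))
        (emb.walkImage (C ⟨i.1 + 2, h2⟩)) =
    annulusBetween (emb.walkImage (C i)) (emb.walkImage (C ⟨i.1 + 2, h2⟩))

/-- The intersection of the walks `P` and `C` is a (possibly trivial) path: the common
vertices and common edges of `P` and `C` are exactly those of some path, in particular
`P` meets `C`. -/
def IsPathIntersection (G : Multigraph) {a b c d : G.V}
    (P : G.Walk a b) (C : G.Walk c d) : Prop :=
  ∃ (x y : G.V) (Q : G.Walk x y), Q.IsPath ∧
    Q.supportSet = P.supportSet ∩ C.supportSet ∧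
    Q.edgeSet = P.edgeSet ∩ C.edgeSet

/-- `G`, embedded in the sphere by `emb`, contains an `(r,q)`-railed annulus: `r` nested
pairwise disjoint cycles all met by `q` paths (rails), the intersection of each rail
with each cycle being a (possibly trivial) path. -/
def HasRailedAnnulus (G : Multigraph) (emb : EmbeddingIn G Sphere2) (r q : ℕ) : Prop :=
  ∃ (c : Fin r → G.V) (C : (i : Fin r) → G.Walk (c i) (c i)),
    NestedCycles emb r c C ∧
    ∃ (a b : Fin q → G.V) (P : (j : Fin q) → G.Walk (a j) (b j)),
      (∀ j, (P j).IsPath) ∧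
      ∀ (i : Fin r) (j : Fin q), IsPathIntersection G (P j) (C i)

/-- `G` is a `k`-edge-sum of `G₁` and `G₂`: there are vertices `v₁` of `G₁` and `v₂` of
`G₂`, both of degree `k`, and a bijection `σ` between the edges at `v₁` and the edges at
`v₂`, such that `G` is obtained from the disjoint union of `G₁` and `G₂` by deleting
`v₁` and `v₂` and lifting every pair `e`, `σ e` to a single new edge. -/
def IsEdgeSum (G G₁ G₂ : Multigraph) (k : ℕ) : Prop :=
  ∃ (v₁ : G₁.V) (v₂ : G₂.V),
    G₁.degree v₁ = k ∧ G₂.degree v₂ = k ∧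
    ∃ (σ : {e : G₁.E // v₁ ∈ G₁.ends e} ≃ {e : G₂.E // v₂ ∈ G₂.ends e})
      (fV : ({u : G₁.V // u ≠ v₁} ⊕ {u : G₂.V // u ≠ v₂}) ≃ G.V)
      (fE : ({e : G₁.E // v₁ ∉ G₁.ends e} ⊕ {e : G₂.E // v₂ ∉ G₂.ends e} ⊕
        {e : G₁.E // v₁ ∈ G₁.ends e}) ≃ G.E),
      (∀ (e : G₁.E) (he : v₁ ∉ G₁.ends e) (a b : G₁.V), G₁.ends e = s(a, b) →
        ∃ (ha : a ≠ v₁) (hb : b ≠ v₁),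
          G.ends (fE (Sum.inl ⟨e, he⟩)) = s(fV (Sum.inl ⟨a, ha⟩), fV (Sum.inl ⟨b, hb⟩))) ∧
      (∀ (e : G₂.E) (he : v₂ ∉ G₂.ends e) (a b : G₂.V), G₂.ends e = s(a, b) →
        ∃ (ha : a ≠ v₂) (hb : b ≠ v₂),
          G.ends (fE (Sum.inr (Sum.inl ⟨e, he⟩))) =
            s(fV (Sum.inr ⟨a, ha⟩), fV (Sum.inr ⟨b, hb⟩))) ∧
      ∀ (e : {e : G₁.E // v₁ ∈ G₁.ends e}) (a : G₁.V) (b : G₂.V),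
        G₁.ends e.1 = s(v₁, a) → G₂.ends (σ e).1 = s(v₂, b) →
        ∃ (ha : a ≠ v₁) (hb : b ≠ v₂),
          G.ends (fE (Sum.inr (Sum.inr e))) =
            s(fV (Sum.inl ⟨a, ha⟩), fV (Sum.inr ⟨b, hb⟩))

/-- `G` can be constructed by applying consecutive `i`-edge-sums, for `i ≤ 3`,
starting from graphs satisfying the predicate `base`. -/
inductive ConstructibleFrom (base : Multigraph → Prop) : Multigraph → Prop where
  | base (G : Multigraph) : base G → ConstructibleFrom base G
  | edgeSum (G G₁ G₂ : Multigraph) (k : ℕ) (hk : k ≤ 3) :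
      ConstructibleFrom base G₁ → ConstructibleFrom base G₂ →
      IsEdgeSum G G₁ G₂ k → ConstructibleFrom base G

end Multigraph

/-!
Let `S` be the side of the cut not containing `v`. It is connected in `G - F`, and the edges
leaving it lie in `F`, so there are at most three of them. Any three vertices of a connected
set `S` can be joined to a common vertex `m ∈ S` by pairwise edge-disjoint walks inside `S`:
take a path between two of them and the first vertex on it reached from the third. Sending
the contracted vertex to `m` and routing each boundary edge through its walk immerses the
contraction in `G`; since immersions compose, an immersion of `K₅` or `K₃,₃` in the
contraction would give one in `G`.
-/

namespace Multigraph

variable {G : Multigraph}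

lemma exists_ends_eq (e : G.E) : ∃ x y, G.ends e = s(x, y) :=
  ⟨_, Sym2.mem_iff_exists.mp (Sym2.out_fst_mem _)⟩

namespace Walk

lemma support_ne_nil {u v : G.V} (p : G.Walk u v) : p.support ≠ [] := by
  cases p <;> simp [support]

lemma start_mem_support {u v : G.V} (p : G.Walk u v) : u ∈ p.support := by
  cases p <;> simp [support]

lemma mem_support_of_mem_edges : ∀ {u v : G.V} {p : G.Walk u v} {e : G.E} {x : G.V},
    e ∈ p.edges → x ∈ G.ends e → x ∈ p.support
  | _, _, cons e' h t, e, x, he, hx => by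
    rcases List.mem_cons.mp he with rfl | he
    · rw [h, Sym2.mem_iff] at hx
      rcases hx with rfl | rfl
      · exact List.mem_cons_self
      · exact List.mem_cons_of_mem _ t.start_mem_support
    · exact List.mem_cons_of_mem _ (mem_support_of_mem_edges he hx)

@[simp]
lemma edges_append : ∀ {u v w : G.V} (p : G.Walk u v) (q : G.Walk v w),
    (p.append q).edges = p.edges ++ q.edges
  | _, _, _, nil, _ => rfl
  | _, _, _, cons _ _ t, q => congrArg _ (edges_append t q)

lemma support_append : ∀ {u v w : G.V} (p : G.Walk u v) (q : G.Walk v w),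
    (p.append q).support = p.support.dropLast ++ q.support
  | _, _, _, nil, _ => rfl
  | _, _, _, cons _ _ t, q => by
    simp only [append, support, List.dropLast_cons_of_ne_nil t.support_ne_nil,
      support_append t q, List.cons_append]

lemma support_append_subset {u v w : G.V} (p : G.Walk u v) (q : G.Walk v w) :
    (p.append q).support ⊆ p.support ++ q.support := by
  rw [support_append]
  exact List.append_subset.mpr
    ⟨List.Subset.trans (List.dropLast_subset _) (List.subset_append_left _ _),
      List.subset_append_right _ _⟩

lemma support_subset_support_append_left : ∀ {u v w : G.V} (p : G.Walk u v) (q : G.Walk v w),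
    p.support ⊆ (p.append q).support
  | _, _, _, nil, q => List.cons_subset.mpr ⟨q.start_mem_support, List.nil_subset _⟩
  | _, _, _, cons _ _ t, q => List.cons_subset_cons _ (support_subset_support_append_left t q)

lemma support_subset_support_append_right {u v w : G.V} (p : G.Walk u v) (q : G.Walk v w) :
    q.support ⊆ (p.append q).support := by
  rw [support_append]
  exact List.subset_append_right _ _

@[simp]
lemma edges_reverse : ∀ {u v : G.V} (p : G.Walk u v), p.reverse.edges = p.edges.reverse
  | _, _, nil => rfl
  | _, _, cons _ _ t => by simp [reverse, edges, edges_reverse t]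

lemma edges_reverse_subset {u v : G.V} (p : G.Walk u v) : p.reverse.edges ⊆ p.edges := by
  rw [edges_reverse]
  exact List.reverse_subset.mpr (List.Subset.refl _)

lemma support_reverse_subset : ∀ {u v : G.V} (p : G.Walk u v), p.reverse.support ⊆ p.support
  | _, _, nil => List.Subset.refl _
  | _, _, cons _ _ t => by
    refine List.Subset.trans (support_append_subset _ _) (List.append_subset.mpr ⟨?_, ?_⟩)
    · exact List.Subset.trans (support_reverse_subset t) (List.subset_cons_self _ _)
    · simp [support, t.start_mem_support]

def copy {u v u' v' : G.V} (p : G.Walk u v) (hu : u = u') (hv : v = v') : G.Walk u' v' :=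
  hu ▸ hv ▸ p

@[simp]
lemma edges_copy {u v u' v' : G.V} (p : G.Walk u v) (hu : u = u') (hv : v = v') :
    (p.copy hu hv).edges = p.edges := by
  subst hu hv; rfl

@[simp]
lemma support_copy {u v u' v' : G.V} (p : G.Walk u v) (hu : u = u') (hv : v = v') :
    (p.copy hu hv).support = p.support := by
  subst hu hv; rfl

lemma exists_eq_append_of_mem_support : ∀ {a b : G.V} (p : G.Walk a b) {u : G.V},
    u ∈ p.support → ∃ (p₁ : G.Walk a u) (p₂ : G.Walk u b), p = p₁.append p₂
  | _, _, nil, _, hu => by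
    obtain rfl := List.mem_singleton.mp hu
    exact ⟨nil, nil, rfl⟩
  | _, _, cons e h t, _, hu => by
    rcases List.mem_cons.mp hu with rfl | hu
    · exact ⟨nil, cons e h t, rfl⟩
    · obtain ⟨t₁, t₂, rfl⟩ := t.exists_eq_append_of_mem_support hu
      exact ⟨cons e h t₁, t₂, rfl⟩

lemma exists_isPath : ∀ {a b : G.V} (p : G.Walk a b),
    ∃ q : G.Walk a b, q.IsPath ∧ q.edges ⊆ p.edges ∧ q.support ⊆ p.support
  | _, _, nil => ⟨nil, List.nodup_singleton _, List.Subset.refl _, List.Subset.refl _⟩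
  | a, _, cons e h t => by
    obtain ⟨q, hq, hqe, hqs⟩ := t.exists_isPath
    by_cases ha : a ∈ q.support
    · obtain ⟨q₁, q₂, rfl⟩ := q.exists_eq_append_of_mem_support ha
      refine ⟨q₂, ?_, ?_, ?_⟩
      · rw [IsPath, support_append] at hq
        exact hq.of_append_right
      · rw [edges_append] at hqe
        exact List.Subset.trans (List.Subset.trans (List.subset_append_right _ _) hqe)
          (List.subset_cons_self _ _)
      · rw [support_append] at hqs
        exact List.Subset.trans (List.Subset.trans (List.subset_append_right _ _) hqs)
          (List.subset_cons_self _ _)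
    · exact ⟨cons e h q, List.nodup_cons.mpr ⟨ha, hq⟩, List.cons_subset_cons _ hqe,
        List.cons_subset_cons _ hqs⟩

lemma IsPath.edges_nodup : ∀ {a b : G.V} {p : G.Walk a b}, p.IsPath → p.edges.Nodup
  | _, _, nil, _ => List.nodup_nil
  | _, _, cons _ h _, hp => by
    rw [IsPath, support, List.nodup_cons] at hp
    exact List.nodup_cons.mpr
      ⟨fun he => hp.1 (mem_support_of_mem_edges he (h ▸ Sym2.mem_mk_left _ _)),
        IsPath.edges_nodup hp.2⟩

lemma exists_prefix_first_mem : ∀ {a b : G.V} (p : G.Walk a b) (T : Set G.V), b ∈ T →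
    ∃ (u : G.V) (q : G.Walk a u), u ∈ T ∧ q.support ⊆ p.support ∧
      ∀ x ∈ q.support, x ∈ T → x = u
  | a, _, nil, _, hb => ⟨a, nil, hb, List.Subset.refl _, fun _ hx _ => List.mem_singleton.mp hx⟩
  | a, _, cons e h t, T, hb => by
    by_cases ha : a ∈ T
    · exact ⟨a, nil, ha, List.cons_subset_cons _ (List.nil_subset _),
        fun _ hx _ => List.mem_singleton.mp hx⟩
    · obtain ⟨u, q, hu, hqs, hfirst⟩ := t.exists_prefix_first_mem T hb
      refine ⟨u, cons e h q, hu, List.cons_subset_cons _ hqs, fun x hx hxT => ?_⟩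
      rcases List.mem_cons.mp hx with rfl | hx
      · exact absurd hxT ha
      · exact hfirst x hx hxT

lemma exists_of_sym2_eq {a b x y : G.V} (p : G.Walk a b) (h : s(x, y) = s(a, b)) :
    ∃ q : G.Walk x y, q.edges ⊆ p.edges := by
  rcases Sym2.eq_iff.mp h with ⟨rfl, rfl⟩ | ⟨rfl, rfl⟩
  · exact ⟨p, List.Subset.refl _⟩
  · exact ⟨p.reverse, p.edges_reverse_subset⟩

lemma IsPath.edgeDisjoint_of_append {a u b : G.V} {p₁ : G.Walk a u} {p₂ : G.Walk u b}
    (hp : (p₁.append p₂).IsPath) : EdgeDisjoint p₁ p₂ :=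
  List.disjoint_of_nodup_append (edges_append p₁ p₂ ▸ hp.edges_nodup)

end Walk

lemma EdgeDisjoint.symm {u v u' v' : G.V} {p : G.Walk u v} {q : G.Walk u' v'}
    (h : EdgeDisjoint p q) : EdgeDisjoint q p :=
  fun e hq hp => h e hp hq

lemma EdgeDisjoint.mono {u v u' v' x y x' y' : G.V} {p : G.Walk u v} {q : G.Walk u' v'}
    {p' : G.Walk x y} {q' : G.Walk x' y'} (h : EdgeDisjoint p q) (hp : p'.edges ⊆ p.edges)
    (hq : q'.edges ⊆ q.edges) : EdgeDisjoint p' q' :=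
  fun e hp' hq' => h e (hp hp') (hq hq')

lemma edgeDisjoint_of_forall_mem_support_eq {u v u' v' m : G.V} {p : G.Walk u v}
    {q : G.Walk u' v'} (h : ∀ x ∈ p.support, x ∈ q.support → x = m) : EdgeDisjoint p q := by
  intro e hp hq
  have hm : ∀ x ∈ G.ends e, x = m := fun x hx =>
    h x (Walk.mem_support_of_mem_edges hp hx) (Walk.mem_support_of_mem_edges hq hx)
  obtain ⟨x, y, hxy⟩ := exists_ends_eq e
  refine G.loopless e (hxy ▸ Sym2.mk_isDiag_iff.mpr ?_)
  rw [hm x (hxy ▸ Sym2.mem_mk_left x y), hm y (hxy ▸ Sym2.mem_mk_right x y)]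

lemma immersion_of_walks {H : Multigraph} (f : H.V → G.V) (hf : Function.Injective f)
    (P : H.E → Σ a b : G.V, G.Walk a b) (hends : ∀ e, (H.ends e).map f = s((P e).1, (P e).2.1))
    (hdisj : Pairwise fun e e' => EdgeDisjoint (P e).2.2 (P e').2.2) : Immersion H G := by
  choose Q hQ hQe _ using fun e => (P e).2.2.exists_isPath
  exact ⟨f, hf, fun e => ⟨_, _, Q e⟩, hQ, hends,
    fun e e' hne => (hdisj hne).mono (hQe e) (hQe e')⟩

lemma Walk.exists_lift {K L : Multigraph} (g : K.V → L.V) (Q : K.E → Σ a b : L.V, L.Walk a b)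
    (hQ : ∀ ε, (K.ends ε).map g = s((Q ε).1, (Q ε).2.1)) :
    ∀ {x y : K.V} (t : K.Walk x y),
      ∃ r : L.Walk (g x) (g y), ∀ d ∈ r.edges, ∃ ε ∈ t.edges, d ∈ (Q ε).2.2.edges
  | _, _, nil => ⟨nil, fun _ hd => absurd hd List.not_mem_nil⟩
  | _, _, @cons _ u v _ ε h t => by
    obtain ⟨r, hr⟩ := exists_lift g Q hQ t
    obtain ⟨q, hq⟩ :=
      (Q ε).2.2.exists_of_sym2_eq (x := g u) (y := g v) (by rw [← hQ ε, h, Sym2.map_mk])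
    refine ⟨q.append r, fun d hd => ?_⟩
    rcases List.mem_append.mp (edges_append q r ▸ hd) with hd | hd
    · exact ⟨ε, List.mem_cons_self, hq hd⟩
    · obtain ⟨ε', hε', hd'⟩ := hr d hd
      exact ⟨ε', List.mem_cons_of_mem _ hε', hd'⟩

lemma Immersion.trans {H K L : Multigraph} (hHK : Immersion H K) (hKL : Immersion K L) :
    Immersion H L := by
  obtain ⟨f, hf, P, -, hPends, hPdisj⟩ := hHK
  obtain ⟨g, hg, Q, -, hQends, hQdisj⟩ := hKL
  choose R hR using fun e => Walk.exists_lift g Q hQends (P e).2.2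
  refine immersion_of_walks (g ∘ f) (hg.comp hf) (fun e => ⟨_, _, R e⟩) (fun e => ?_)
    fun e e' hne d hd hd' => ?_
  · rw [← Sym2.map_map, hPends e, Sym2.map_mk]
  · obtain ⟨ε, hε, hdε⟩ := hR e d hd
    obtain ⟨ε', hε', hdε'⟩ := hR e' d hd'
    by_cases hεε : ε = ε'
    · subst hεε
      exact hPdisj e e' hne ε hε hε'
    · exact hQdisj ε ε' hεε d hdε hdε'

namespace ConnectedIn

variable {S : Set G.V}

lemma exists_median (hS : G.ConnectedIn S) (s : Fin 3 → G.V) (hs : ∀ k, s k ∈ S) :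
    ∃ m ∈ S, ∃ W : ∀ k, G.Walk (s k) m, (∀ k, (W k).supportSet ⊆ S) ∧
      Pairwise fun k k' => EdgeDisjoint (W k) (W k') := by
  obtain ⟨p₀, hp₀S⟩ := hS _ (hs 1) _ (hs 2)
  obtain ⟨p, hp, -, hps⟩ := p₀.exists_isPath
  obtain ⟨q, hqS⟩ := hS _ (hs 0) _ (hs 1)
  obtain ⟨m, r, hm, hrs, hfirst⟩ :=
    q.exists_prefix_first_mem {x | x ∈ p.support} p.start_mem_support
  obtain ⟨p₁, p₂, rfl⟩ := p.exists_eq_append_of_mem_support hm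
  have hr : EdgeDisjoint r (p₁.append p₂) := edgeDisjoint_of_forall_mem_support_eq hfirst
  have hr₁ : EdgeDisjoint r p₁ :=
    hr.mono (List.Subset.refl _) (by simp only [Walk.edges_append, List.subset_append_left])
  have hr₂ : EdgeDisjoint r p₂.reverse :=
    hr.mono (List.Subset.refl _)
      (List.Subset.trans p₂.edges_reverse_subset
        (by simp only [Walk.edges_append, List.subset_append_right]))
  have h₁₂ : EdgeDisjoint p₁ p₂.reverse :=
    hp.edgeDisjoint_of_append.mono (List.Subset.refl _) p₂.edges_reverse_subset
  have hpS : ∀ x ∈ (p₁.append p₂).support, x ∈ S := fun x hx => hp₀S x (hps hx)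
  refine ⟨m, hpS m hm, fun | 0 => r | 1 => p₁ | 2 => p₂.reverse, ?_, ?_⟩
  · intro k x hx
    fin_cases k
    · exact hqS x (hrs hx)
    · exact hpS x (p₁.support_subset_support_append_left p₂ hx)
    · exact hpS x (p₁.support_subset_support_append_right p₂ (p₂.support_reverse_subset hx))
  · intro k k' hkk'
    fin_cases k <;> fin_cases k'
    all_goals first
      | exact absurd rfl hkk'
      | exact hr₁ | exact hr₂ | exact h₁₂
      | exact hr₁.symm | exact hr₂.symm | exact h₁₂.symm

lemma exists_edgeDisjoint_walks (hS : G.ConnectedIn S) (hne : S.Nonempty) {ι : Type*}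
    [Finite ι] (hι : Nat.card ι ≤ 3) (s : ι → G.V) (hs : ∀ i, s i ∈ S) :
    ∃ m ∈ S, ∃ W : ∀ i, G.Walk (s i) m, (∀ i, (W i).supportSet ⊆ S) ∧
      Pairwise fun i i' => EdgeDisjoint (W i) (W i') := by
  obtain ⟨w₀, hw₀⟩ := hne
  let j : ι ↪ Fin 3 := (Finite.equivFin ι).toEmbedding.trans (Fin.castLEEmb hι)
  have hs' : ∀ k, Function.extend j s (fun _ => w₀) k ∈ S := by
    intro k
    by_cases hk : ∃ i, j i = k
    · obtain ⟨i, rfl⟩ := hk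
      rw [j.injective.extend_apply]
      exact hs i
    · rw [Function.extend_apply' _ _ _ hk]
      exact hw₀
  obtain ⟨m, hm, W, hWS, hWdisj⟩ := hS.exists_median _ hs'
  refine ⟨m, hm, fun i => (W (j i)).copy (j.injective.extend_apply s _ i) rfl,
    fun i x hx => hWS (j i) ?_, fun i i' hii' e he he' => hWdisj (j.injective.ne hii') e ?_ ?_⟩
  · simpa [Walk.supportSet] using hx
  · simpa using he
  · simpa using he'

end ConnectedIn

def edgeBoundary (G : Multigraph) (S : Set G.V) : Set G.E :=
  {e | ∃ a b, G.ends e = s(a, b) ∧ a ∉ S ∧ b ∈ S}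

lemma map_ends_contractSet (S : Set G.V) (m : G.V) (ε : (G.contractSet S).E) :
    ((G.contractSet S).ends ε).map (Sum.elim Subtype.val fun _ => m) =
      (G.ends ε.1).map fun x => if x ∈ S then m else x := by
  show ((G.ends ε.1).map _).map _ = _
  rw [Sym2.map_map]
  congr 1
  funext x
  by_cases hx : x ∈ S <;> simp [hx]

lemma not_mem_of_mem_ends_of_not_mem_edgeBoundary {S : Set G.V} {e : G.E}
    (h : ¬ ∀ x ∈ G.ends e, x ∈ S) (he : e ∉ G.edgeBoundary S) : ∀ z ∈ G.ends e, z ∉ S := by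
  intro z hz hzS
  obtain ⟨w, hw, hwS⟩ : ∃ w ∈ G.ends e, w ∉ S := by simpa using h
  exact he ⟨w, z, (Sym2.mem_and_mem_iff (ne_of_mem_of_not_mem hzS hwS).symm).mp ⟨hw, hz⟩,
    hwS, hzS⟩

lemma immersion_contractSet {S : Set G.V} (hS : G.ConnectedIn S) (hne : S.Nonempty)
    (hcard : Nat.card (G.edgeBoundary S) ≤ 3) : Immersion (G.contractSet S) G := by
  choose a b hab ha hb using fun i : G.edgeBoundary S => i.2
  obtain ⟨m, hm, W, hWS, hWdisj⟩ := hS.exists_edgeDisjoint_walks hne hcard b hb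
  -- connector edges lie inside `S`, so they are not edges of the contraction
  have hWin : ∀ i d, d ∈ (W i).edges → ∀ z ∈ G.ends d, z ∈ S :=
    fun i _ hd _ hz => hWS i (Walk.mem_support_of_mem_edges hd hz)
  have hf : Function.Injective (Sum.elim Subtype.val fun _ => m : (G.contractSet S).V → G.V) :=
    Subtype.val_injective.sumElim (Function.injective_of_subsingleton _)
      fun u _ h => u.2 (h ▸ hm)
  have hwalk : ∀ ε : (G.contractSet S).E, ∃ (x y : G.V) (p : G.Walk x y),
      ((G.contractSet S).ends ε).map (Sum.elim Subtype.val fun _ => m) = s(x, y) ∧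
      ∀ d ∈ p.edges, d = ε.1 ∨ ∃ h : ε.1 ∈ G.edgeBoundary S, d ∈ (W ⟨ε.1, h⟩).edges := by
    intro ε
    rw [map_ends_contractSet]
    by_cases hε : ε.1 ∈ G.edgeBoundary S
    · refine ⟨a ⟨_, hε⟩, m, .cons ε.1 (hab ⟨_, hε⟩) (W ⟨_, hε⟩), ?_, fun d hd => ?_⟩
      · rw [hab ⟨_, hε⟩, Sym2.map_mk, if_neg (ha _), if_pos (hb _)]
      · rcases List.mem_cons.mp hd with rfl | hd
        exacts [Or.inl rfl, Or.inr ⟨hε, hd⟩]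
    · have hout := not_mem_of_mem_ends_of_not_mem_edgeBoundary ε.2 hε
      obtain ⟨x, y, hxy⟩ := exists_ends_eq ε.1
      refine ⟨x, y, .cons ε.1 hxy .nil, ?_, fun d hd => Or.inl (List.mem_singleton.mp hd)⟩
      rw [hxy, Sym2.map_mk, if_neg (hout x (hxy ▸ Sym2.mem_mk_left x y)),
        if_neg (hout y (hxy ▸ Sym2.mem_mk_right x y))]
  choose x y p hpends hpedges using hwalk
  refine immersion_of_walks _ hf (fun ε => ⟨x ε, y ε, p ε⟩) hpends
    fun ε ε' hne d hd hd' => ?_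
  rcases hpedges ε d hd with h | ⟨hε, hd⟩ <;> rcases hpedges ε' d hd' with h' | ⟨hε', hd'⟩
  · exact hne (Subtype.ext (h.symm.trans h'))
  · exact ε.2 (h ▸ hWin _ _ hd')
  · exact ε'.2 (h' ▸ hWin _ _ hd)
  · exact hWdisj (fun h => hne (Subtype.ext (congrArg (·.1) h))) d hd hd'

lemma Reachable.symm {u v : G.V} (h : G.Reachable u v) : G.Reachable v u :=
  G.reachSetoid.iseqv.symm h

lemma Reachable.trans {u v w : G.V} (h : G.Reachable u v) (h' : G.Reachable v w) :
    G.Reachable u w :=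
  G.reachSetoid.iseqv.trans h h'

lemma reachable_of_mem_support : ∀ {u v : G.V} (p : G.Walk u v) {x : G.V},
    x ∈ p.support → G.Reachable u x
  | _, _, .nil, _, hx => List.mem_singleton.mp hx ▸ ⟨.nil⟩
  | _, _, .cons e h t, _, hx => by
    rcases List.mem_cons.mp hx with rfl | hx
    · exact ⟨.nil⟩
    · obtain ⟨w⟩ := reachable_of_mem_support t hx
      exact ⟨.cons e h w⟩

lemma exists_walk_of_deleteEdges {F : Set G.E} :
    ∀ {a b : G.V} (w : (G.deleteEdges F).Walk a b), ∃ w' : G.Walk a b, w'.support = w.support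
  | _, _, .nil => ⟨.nil, rfl⟩
  | _, _, .cons e h t => by
    obtain ⟨t', ht'⟩ := exists_walk_of_deleteEdges t
    exact ⟨.cons e.1 h t', congrArg _ ht'⟩

lemma numComponents_eq_one_of_forall_reachable (v : G.V) (h : ∀ u, G.Reachable u v) :
    G.numComponents = 1 :=
  Nat.card_eq_one_iff_unique.mpr
    ⟨⟨fun x y => Quotient.inductionOn₂ x y fun a b => Quotient.sound ((h a).trans (h b).symm)⟩,
      ⟨Quotient.mk _ v⟩⟩

lemma two_lt_numComponents {a b v : G.V} (hab : ¬ G.Reachable a b) (hav : ¬ G.Reachable a v)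
    (hbv : ¬ G.Reachable b v) : 2 < G.numComponents := by
  have : Fintype (Quotient G.reachSetoid) := Fintype.ofFinite _
  rw [numComponents, Nat.card_eq_fintype_card, Fintype.two_lt_card_iff]
  exact ⟨Quotient.mk _ a, Quotient.mk _ b, Quotient.mk _ v, fun h => hab (Quotient.exact h),
    fun h => hav (Quotient.exact h), fun h => hbv (Quotient.exact h)⟩

lemma nonempty_setOf_not_reachable (h2 : G.numComponents = 2) (v : G.V) :
    {u | ¬ G.Reachable u v}.Nonempty := by
  by_contra h
  have := numComponents_eq_one_of_forall_reachable v fun u => by_contra fun hu => h ⟨u, hu⟩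
  omega

lemma connectedIn_setOf_not_reachable_deleteEdges {F : Set G.E}
    (h2 : (G.deleteEdges F).numComponents = 2) (v : G.V) :
    G.ConnectedIn {u | ¬ (G.deleteEdges F).Reachable u v} := by
  intro a ha b hb
  obtain ⟨w⟩ : (G.deleteEdges F).Reachable a b :=
    by_contra fun hab => (two_lt_numComponents hab ha hb).ne' h2
  obtain ⟨w', hw'⟩ := exists_walk_of_deleteEdges w
  exact ⟨w', fun x hx hxv => ha ((reachable_of_mem_support w (hw' ▸ hx)).trans hxv)⟩

lemma edgeBoundary_setOf_not_reachable_deleteEdges_subset (F : Set G.E) (v : G.V) :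
    G.edgeBoundary {u | ¬ (G.deleteEdges F).Reachable u v} ⊆ F := by
  rintro e ⟨a, b, hab, ha, hb⟩
  by_contra heF
  have hba : (G.deleteEdges F).Reachable b a :=
    ⟨.cons (⟨e, heF⟩ : (G.deleteEdges F).E) (hab.trans Sym2.eq_swap) .nil⟩
  exact hb (hba.trans (not_not.mp ha))

end Multigraph

namespace Multigraph

theorem statement1 (G : Multigraph) (hconn : G.Connected)
    (h5 : ¬ Immersion K5 G) (h33 : ¬ Immersion K33 G)
    (F : Set G.E) (hF : G.IsInternalEdgeCut F) (hcard : Nat.card ↥F ≤ 3) :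
    ∀ v : G.V,
      ¬ Immersion K5 (G.contractSet {u : G.V | ¬ (G.deleteEdges F).Reachable u v}) ∧
      ¬ Immersion K33 (G.contractSet {u : G.V | ¬ (G.deleteEdges F).Reachable u v}) := by
  intro v
  have h2 : (G.deleteEdges F).numComponents = 2 := by
    rw [hF.1.2, numComponents_eq_one_of_forall_reachable v fun u => hconn u v]
  have himm := immersion_contractSet (connectedIn_setOf_not_reachable_deleteEdges h2 v)
    (nonempty_setOf_not_reachable h2 v)
    ((Nat.card_mono F.toFinite (edgeBoundary_setOf_not_reachable_deleteEdges_subset F v)).trans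
      hcard)
  exact ⟨fun h => h5 (h.trans himm), fun h => h33 (h.trans himm)⟩

end Multigraph
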